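/- The equivalence ≡_A is exactly characterized as follows: t₁ ≡_A t₂ iff there is a multiplicity-preserving bijection between occurrences of t₁ and t₂ matching equal calls, which preserves the relative order of every pair of occurrences (a, b) such that a or b is sequential, or both a and b are readonly. -/

import Mathlib

/-!
Every allowed swap exchanges an adjacent pair that is not blocked, so composing the
transpositions along a chain of swaps yields a matching bijection that keeps every blocked
pair in order. Conversely, if such a bijection `σ` is not monotone, it reverses some adjacent
pair of `t₁`; that pair cannot be blocked, so swapping it is an allowed step, and the new
bijection has one inversion fewer. Induction on the number of inversions ends at a monotone
`σ`, which forces `t₁ = t₂`.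
-/

/-- Annotation classes for external calls. -/
inductive Ann where
  | sequential | readonly | unordered
deriving DecidableEq

/-- An external call: an identifier together with its annotation class. -/
structure Call where
  name : ℕ
  ann : Ann
deriving DecidableEq

/-- A swap of adjacent calls `a`, `b` is allowed iff neither is sequential
and not both are readonly. -/
def allowedSwap (a b : Call) : Prop :=
  a.ann ≠ Ann.sequential ∧ b.ann ≠ Ann.sequential ∧
    ¬(a.ann = Ann.readonly ∧ b.ann = Ann.readonly)

/-- One allowed adjacent swap in a trace. -/
inductive SwapStep : List Call → List Call → Prop
  | swap (pre post : List Call) (a b : Call) (h : allowedSwap a b) :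
      SwapStep (pre ++ a :: b :: post) (pre ++ b :: a :: post)

/-- `TraceEquiv t₁ t₂` (`t₁ ≡_A t₂`): `t₂` is obtained from `t₁` by a finite
sequence of allowed adjacent swaps. -/
def TraceEquiv : List Call → List Call → Prop :=
  Relation.ReflTransGen SwapStep

/-- A pair of calls for which adjacent swapping is disallowed:
one of them is sequential, or both are readonly. -/
def blockedPair (a b : Call) : Prop :=
  a.ann = Ann.sequential ∨ b.ann = Ann.sequential ∨
    (a.ann = Ann.readonly ∧ b.ann = Ann.readonly)

open Finset

theorem Fin.swap_lt_swap_of_adjacent {n : ℕ} {p q i j : Fin n} (hpq : (q : ℕ) = p + 1)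
    (hij : i < j) (hne : ¬(i = p ∧ j = q)) : Equiv.swap p q i < Equiv.swap p q j := by
  simp only [Equiv.swap_apply_def, Fin.lt_def, Fin.ext_iff] at hij hne ⊢
  split_ifs <;> omega

theorem Fin.strictMono_of_le_succ {n : ℕ} {β : Type*} [PartialOrder β] {f : Fin n → β}
    (hf : Function.Injective f)
    (h : ∀ k (hk : k + 1 < n), f ⟨k, by omega⟩ ≤ f ⟨k + 1, hk⟩) : StrictMono f := by
  cases n with
  | zero => exact fun i => i.elim0
  | succ n =>
    exact (Fin.monotone_iff_le_succ.2 fun i => h i i.succ.isLt).strictMono_of_injective hf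

section Inversions

variable {n : ℕ} {β : Type*} [LinearOrder β]

def inversions (f : Fin n → β) : Finset (Fin n × Fin n) :=
  univ.filter fun x => x.1 < x.2 ∧ f x.2 < f x.1

theorem card_inversions_comp_cast {n' : ℕ} (h : n' = n) (f : Fin n → β) :
    #(inversions (f ∘ Fin.cast h)) = #(inversions f) := by
  subst h; rfl

theorem card_inversions_comp_swap_lt (f : Fin n → β) {p q : Fin n} (hpq : (q : ℕ) = p + 1)
    (hf : f q < f p) : #(inversions (f ∘ Equiv.swap p q)) < #(inversions f) := by
  set s := Equiv.swap p q
  have hpq' : p < q := by rw [Fin.lt_def]; omega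
  -- relabelling by `s` sends the inversions of `f ∘ s` to inversions of `f` other than `(p, q)`
  have hsub : (inversions (f ∘ s)).map (s.prodCongr s).toEmbedding ⊆
      (inversions f).erase (p, q) := by
    rintro _ hx
    obtain ⟨⟨i, j⟩, hij, rfl⟩ := Finset.mem_map.1 hx
    simp only [inversions, mem_filter, mem_univ, true_and, Function.comp_apply] at hij
    have hne : ¬(i = p ∧ j = q) := by
      rintro ⟨rfl, rfl⟩
      exact hf.asymm (by simpa [s] using hij.2)
    simp only [mem_erase, inversions, mem_filter, mem_univ, true_and, Equiv.toEmbedding_apply,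
      Equiv.prodCongr_apply, Prod.map, ne_eq, Prod.mk.injEq]
    refine ⟨?_, Fin.swap_lt_swap_of_adjacent hpq hij.1 hne, hij.2⟩
    rintro ⟨hi, hj⟩
    rw [Equiv.swap_apply_eq_iff, Equiv.swap_apply_left] at hi
    rw [Equiv.swap_apply_eq_iff, Equiv.swap_apply_right] at hj
    exact hpq'.asymm (hi ▸ hj ▸ hij.1)
  calc #(inversions (f ∘ s)) ≤ #((inversions f).erase (p, q)) := by
        simpa only [card_map] using card_le_card hsub
    _ < #(inversions f) := card_erase_lt_of_mem (by simp [inversions, hpq', hf])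

end Inversions

section Lists

variable {α : Type*}

theorem List.eq_of_strictMono_equiv {l₁ l₂ : List α} (σ : Fin l₁.length ≃ Fin l₂.length)
    (hσ : StrictMono σ) (h : ∀ i, l₂.get (σ i) = l₁.get i) : l₁ = l₂ := by
  have hval (i) : (σ i : ℕ) = i :=
    Fin.coe_orderIso_apply (hσ.orderIsoOfSurjective σ σ.surjective) i
  have hlen : l₁.length = l₂.length := by simpa using Fintype.card_congr σ
  exact List.ext_get hlen fun k h₁ h₂ => by simpa [hval] using (h ⟨k, h₁⟩).symm

theorem List.exists_eq_append_cons_cons (l : List α) {k : ℕ} (hk : k + 1 < l.length) :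
    ∃ pre a b post, l = pre ++ a :: b :: post ∧ pre.length = k :=
  ⟨l.take k, l[k], l[k + 1], l.drop (k + 2), by simp, by simp; omega⟩

variable (pre post : List α) (a b : α)

def adjSwapEquiv : Fin (pre ++ a :: b :: post).length ≃ Fin (pre ++ b :: a :: post).length :=
  (finCongr (by simp)).trans (Equiv.swap ⟨pre.length, by simp⟩ ⟨pre.length + 1, by simp⟩)

theorem get_adjSwapEquiv (i : Fin (pre ++ a :: b :: post).length) :
    (pre ++ b :: a :: post).get (adjSwapEquiv pre post a b i) =
      (pre ++ a :: b :: post).get i := by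
  rcases i with ⟨i, hi⟩
  simp only [adjSwapEquiv, Equiv.trans_apply, finCongr_apply, Equiv.swap_apply_def,
    Fin.ext_iff, Fin.val_cast]
  split_ifs <;> simp_all [List.getElem_append, List.getElem_cons]
  split_ifs <;> first | rfl | omega

theorem adjSwapEquiv_lt_adjSwapEquiv {i j : Fin (pre ++ a :: b :: post).length} (hij : i < j)
    (hne : ¬((i : ℕ) = pre.length ∧ (j : ℕ) = pre.length + 1)) :
    adjSwapEquiv pre post a b i < adjSwapEquiv pre post a b j :=
  Fin.swap_lt_swap_of_adjacent rfl ((Fin.cast_lt_cast (by simp)).2 hij)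
    fun h => hne ⟨congrArg Fin.val h.1, congrArg Fin.val h.2⟩

end Lists

structure IsOrderedMatching {α : Type*} (r : α → α → Prop) (l₁ l₂ : List α)
    (σ : Fin l₁.length ≃ Fin l₂.length) : Prop where
  get_apply : ∀ i, l₂.get (σ i) = l₁.get i
  lt_of_rel : ∀ i j, i < j → r (l₁.get i) (l₁.get j) → σ i < σ j

namespace IsOrderedMatching

variable {α : Type*} {r : α → α → Prop}

theorem refl (l : List α) : IsOrderedMatching r l l (Equiv.refl _) :=
  ⟨fun _ => rfl, fun _ _ hij _ => hij⟩

theorem trans {l₁ l₂ l₃ : List α} {σ : Fin l₁.length ≃ Fin l₂.length}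
    {τ : Fin l₂.length ≃ Fin l₃.length} (hσ : IsOrderedMatching r l₁ l₂ σ)
    (hτ : IsOrderedMatching r l₂ l₃ τ) : IsOrderedMatching r l₁ l₃ (σ.trans τ) where
  get_apply i := (hτ.get_apply (σ i)).trans (hσ.get_apply i)
  lt_of_rel i j hij hr :=
    hτ.lt_of_rel _ _ (hσ.lt_of_rel i j hij hr) (by rwa [hσ.get_apply, hσ.get_apply])

end IsOrderedMatching

theorem isOrderedMatching_adjSwapEquiv {α : Type*} {r : α → α → Prop} (pre post : List α)
    {a b : α} (hab : ¬r a b) :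
    IsOrderedMatching r (pre ++ a :: b :: post) (pre ++ b :: a :: post)
      (adjSwapEquiv pre post a b) where
  get_apply := get_adjSwapEquiv pre post a b
  lt_of_rel i j hij hr := by
    refine adjSwapEquiv_lt_adjSwapEquiv pre post a b hij ?_
    rintro ⟨hi, hj⟩
    exact hab (by simpa [hi, hj] using hr)

theorem allowedSwap_iff_not_blockedPair (a b : Call) : allowedSwap a b ↔ ¬blockedPair a b := by
  unfold allowedSwap blockedPair; tauto

theorem blockedPair_comm (a b : Call) : blockedPair a b ↔ blockedPair b a := by
  unfold blockedPair; tauto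

theorem TraceEquiv.exists_isOrderedMatching {t₁ t₂ : List Call} (h : TraceEquiv t₁ t₂) :
    ∃ σ, IsOrderedMatching blockedPair t₁ t₂ σ := by
  induction h with
  | refl => exact ⟨_, .refl _⟩
  | tail _ hstep ih =>
    obtain ⟨σ, hσ⟩ := ih
    obtain ⟨pre, post, a, b, hab⟩ := hstep
    exact ⟨_, hσ.trans <|
      isOrderedMatching_adjSwapEquiv pre post ((allowedSwap_iff_not_blockedPair a b).1 hab)⟩

theorem traceEquiv_of_isOrderedMatching {t₁ t₂ : List Call}
    (σ : Fin t₁.length ≃ Fin t₂.length) (hσ : IsOrderedMatching blockedPair t₁ t₂ σ) :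
    TraceEquiv t₁ t₂ := by
  induction hn : #(inversions σ) using Nat.strong_induction_on generalizing t₁ with
  | _ n ih =>
    by_cases hdesc : ∃ k, ∃ hk : k + 1 < t₁.length, σ ⟨k + 1, hk⟩ < σ ⟨k, by omega⟩
    · obtain ⟨k, hk, hlt⟩ := hdesc
      obtain ⟨pre, a, b, post, rfl, rfl⟩ := List.exists_eq_append_cons_cons t₁ hk
      have hab : ¬blockedPair a b := fun hab =>
        hlt.asymm (hσ.lt_of_rel _ _ (by simp [Fin.lt_def]) (by simpa using hab))
      have hσ' :=
        (isOrderedMatching_adjSwapEquiv pre post (mt (blockedPair_comm b a).1 hab)).trans hσ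
      refine .head (.swap pre post a b ((allowedSwap_iff_not_blockedPair a b).2 hab))
        (ih _ ?_ _ hσ' rfl)
      rw [← hn]
      change #(inversions ((σ ∘ Equiv.swap _ _) ∘ Fin.cast (by simp))) < _
      rw [card_inversions_comp_cast]
      exact card_inversions_comp_swap_lt _ rfl hlt
    · push Not at hdesc
      have hmono := Fin.strictMono_of_le_succ σ.injective hdesc
      rw [List.eq_of_strictMono_equiv σ hmono hσ.get_apply]
      exact .refl

/-- `t₁ ≡_A t₂` iff there is a bijection between occurrences
matching equal calls that preserves the relative order of every pair of
occurrences `(a, b)` where `a` or `b` is sequential, or both are readonly. -/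
theorem traceEquiv_iff_order_preserving_bijection (t₁ t₂ : List Call) :
    TraceEquiv t₁ t₂ ↔
      ∃ σ : Fin t₁.length ≃ Fin t₂.length,
        (∀ i : Fin t₁.length, t₂.get (σ i) = t₁.get i) ∧
        (∀ i j : Fin t₁.length, i < j →
          blockedPair (t₁.get i) (t₁.get j) → σ i < σ j) := by
  constructor
  · intro h
    obtain ⟨σ, hσ⟩ := h.exists_isOrderedMatching
    exact ⟨σ, hσ.get_apply, hσ.lt_of_rel⟩
  · rintro ⟨σ, hget, hlt⟩
    exact traceEquiv_of_isOrderedMatching σ ⟨hget, hlt⟩
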